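/- For arbitrary crossed modules of commutative algebras A and A', homotopy of crossed module morphisms A → A' is an equivalence relation; moreover there is a groupoid whose objects are crossed module morphisms A → A' and whose morphisms f → g are f₀-derivations s with g₀ = f₀ + ∂'∘s and g₁ = f₁ + s∘∂, with identity the zero derivation, composition given by pointwise addition, and inverse given by negation. -/

import Mathlib

/-- An action of a commutative `k`-algebra `R` on a commutative `k`-algebra `M`:
a `k`-bilinear map satisfying `r▶(mm') = (r▶m)m' = m(r▶m')` and `(rr')▶m = r▶(r'▶m)`. -/
structure AlgAction (k R M : Type*) [CommRing k] [CommRing R] [CommRing M]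
    [Algebra k R] [Algebra k M] where
  act : R →ₗ[k] M →ₗ[k] M
  a1 : ∀ (r : R) (m m' : M), act r (m * m') = act r m * m'
  a1' : ∀ (r : R) (m m' : M), act r (m * m') = m * act r m'
  a2 : ∀ (r r' : R) (m : M), act (r * r') m = act r (act r' m)

/-- A pre-crossed module of commutative `k`-algebras. -/
structure PreCrossedModule (k E R : Type*) [CommRing k] [CommRing E] [CommRing R]
    [Algebra k E] [Algebra k R] extends AlgAction k R E where
  map : E →ₗ[k] R
  map_mul : ∀ e e' : E, map (e * e') = map e * map e'
  xm1 : ∀ (r : R) (e : E), map (act r e) = r * map e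

/-- A crossed module of commutative `k`-algebras. -/
structure CrossedModule (k E R : Type*) [CommRing k] [CommRing E] [CommRing R]
    [Algebra k E] [Algebra k R] extends PreCrossedModule k E R where
  xm2 : ∀ e e' : E, act (map e) e' = e * e'

/-- A morphism of crossed modules of commutative `k`-algebras. -/
structure XHom {k E R E' R' : Type*} [CommRing k] [CommRing E] [CommRing R]
    [CommRing E'] [CommRing R'] [Algebra k E] [Algebra k R] [Algebra k E'] [Algebra k R']
    (C : CrossedModule k E R) (C' : CrossedModule k E' R') where
  f0 : R →ₗ[k] R'
  f1 : E →ₗ[k] E'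
  f0_mul : ∀ r r', f0 (r * r') = f0 r * f0 r'
  f1_mul : ∀ e e', f1 (e * e') = f1 e * f1 e'
  comm : ∀ e, f0 (C.map e) = C'.map (f1 e)
  hact : ∀ r e, f1 (C.act r e) = C'.act (f0 r) (f1 e)

/-- `s : R → E'` is an `f₀`-derivation. -/
def IsDeriv {k E R E' R' : Type*} [CommRing k] [CommRing E] [CommRing R]
    [CommRing E'] [CommRing R'] [Algebra k E] [Algebra k R] [Algebra k E'] [Algebra k R']
    {C : CrossedModule k E R} {C' : CrossedModule k E' R'}
    (f : XHom C C') (s : R →ₗ[k] E') : Prop :=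
  ∀ r r', s (r * r') = C'.act (f.f0 r) (s r') + C'.act (f.f0 r') (s r) + s r * s r'

/-- `s` connects `f` to `g`: `g₀ = f₀ + ∂'∘s` and `g₁ = f₁ + s∘∂`. -/
def Connects {k E R E' R' : Type*} [CommRing k] [CommRing E] [CommRing R]
    [CommRing E'] [CommRing R'] [Algebra k E] [Algebra k R] [Algebra k E'] [Algebra k R']
    {C : CrossedModule k E R} {C' : CrossedModule k E' R'}
    (f g : XHom C C') (s : R →ₗ[k] E') : Prop :=
  (∀ r, g.f0 r = f.f0 r + C'.map (s r)) ∧ (∀ e, g.f1 e = f.f1 e + s (C.map e))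

/-!
A derivation `s` connecting `f` to `g` shifts the action through `g₀` by multiplication with `s`:
`g₀(r) ▶ m = f₀(r) ▶ m + ∂'(s r) ▶ m = f₀(r) ▶ m + s(r) m`, by the Peiffer identity of `C'`.
With this, the derivation identities for `-s` (relative to `g`) and for `s + s'` (relative to `f`)
are ring identities, and the connection conditions are additive in `s`.
-/

section Homotopy

variable {k E R E' R' : Type*} [CommRing k] [CommRing E] [CommRing R] [CommRing E'] [CommRing R']
  [Algebra k E] [Algebra k R] [Algebra k E'] [Algebra k R']
  {C : CrossedModule k E R} {C' : CrossedModule k E' R'} {f g h : XHom C C'} {s s' : R →ₗ[k] E'}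

theorem isDeriv_zero (f : XHom C C') : IsDeriv f 0 := by
  intro r r'
  simp

theorem connects_refl (f : XHom C C') : Connects f f 0 :=
  ⟨fun r => by simp, fun e => by simp⟩

theorem Connects.symm (hfg : Connects f g s) : Connects g f (-s) := by
  refine ⟨fun r => ?_, fun e => ?_⟩
  · rw [hfg.1 r, LinearMap.neg_apply, map_neg, add_neg_cancel_right]
  · rw [hfg.2 e, LinearMap.neg_apply, add_neg_cancel_right]

theorem Connects.trans (hfg : Connects f g s) (hgh : Connects g h s') :
    Connects f h (s + s') := by
  refine ⟨fun r => ?_, fun e => ?_⟩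
  · rw [hgh.1 r, hfg.1 r, LinearMap.add_apply, map_add, add_assoc]
  · rw [hgh.2 e, hfg.2 e, LinearMap.add_apply, add_assoc]

theorem Connects.act_eq (hfg : Connects f g s) (r : R) (m : E') :
    C'.act (g.f0 r) m = C'.act (f.f0 r) m + s r * m := by
  rw [hfg.1 r, map_add, LinearMap.add_apply, C'.xm2]

theorem IsDeriv.neg (hs : IsDeriv f s) (hfg : Connects f g s) : IsDeriv g (-s) := by
  intro r r'
  simp only [LinearMap.neg_apply, map_neg, hfg.act_eq, hs r r']
  ring

theorem IsDeriv.add (hs : IsDeriv f s) (hfg : Connects f g s) (hs' : IsDeriv g s') :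
    IsDeriv f (s + s') := by
  intro r r'
  simp only [LinearMap.add_apply, map_add, hs r r', hs' r r', hfg.act_eq]
  ring

end Homotopy

theorem stmt15 (k E R E2 R2 : Type*) [CommRing k] [CommRing E] [CommRing R] [CommRing E2] [CommRing R2]
    [Algebra k E] [Algebra k R] [Algebra k E2] [Algebra k R2]
    (C : CrossedModule k E R) (C2 : CrossedModule k E2 R2) :
    Equivalence (fun f g : XHom C C2 => ∃ s : R →ₗ[k] E2, IsDeriv f s ∧ Connects f g s) ∧
    (∀ f : XHom C C2, IsDeriv f 0 ∧ Connects f f 0) ∧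
    (∀ (f g : XHom C C2) (s : R →ₗ[k] E2),
      IsDeriv f s → Connects f g s → IsDeriv g (-s) ∧ Connects g f (-s)) ∧
    (∀ (f g h : XHom C C2) (s s' : R →ₗ[k] E2),
      IsDeriv f s → Connects f g s → IsDeriv g s' → Connects g h s' →
        IsDeriv f (s + s') ∧ Connects f h (s + s')) := by
  refine ⟨⟨fun f => ⟨0, isDeriv_zero f, connects_refl f⟩, ?_, ?_⟩,
    fun f => ⟨isDeriv_zero f, connects_refl f⟩,
    fun _ _ _ hs hfg => ⟨hs.neg hfg, hfg.symm⟩,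
    fun _ _ _ _ _ hs hfg hs' hgh => ⟨hs.add hfg hs', hfg.trans hgh⟩⟩
  · rintro f g ⟨s, hs, hfg⟩
    exact ⟨-s, hs.neg hfg, hfg.symm⟩
  · rintro f g h ⟨s, hs, hfg⟩ ⟨s', hs', hgh⟩
    exact ⟨s + s', hs.add hfg hs', hfg.trans hgh⟩
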